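/- arXiv:2512.24581 — 3 statements merged into one kernel-verified Lean document; each statement's English description precedes it below -/
import Mathlib

section
/- Let n ≥ 5 and let V be a set of words over an n-letter alphabet, all of length L, such that for any two distinct u, v ∈ V the local exponent of uv is at most n/(n-1). Then any word v that is a factor of two distinct words v₁, v₂ ∈ V satisfies |v| < 2L/(n-1). -/
open List

/-- `p` is a period of the word `w`. -/
def HasPeriod {α : Type*} (w : List α) (p : ℕ) : Prop :=
  1 ≤ p ∧ ∀ i, i + p < w.length → w[i]? = w[i + p]?

/-- minimal period of a word -/
noncomputable def per {α : Type*} (w : List α) : ℕ := sInf {p | _root_.HasPeriod w p}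

/-- local exponent of `w` is at most `q`: every nonempty factor has exponent ≤ q. -/
noncomputable def lexpLE {α : Type*} (w : List α) (q : ℚ) : Prop :=
  ∀ v : List α, v <:+: w → v ≠ [] → (v.length : ℚ) / per v ≤ q

/-- `v` is a (finite) factor of the infinite word `ω`. -/
def FactorOfInf {α : Type*} (v : List α) (ω : ℕ → α) : Prop :=
  ∃ i : ℕ, v = List.ofFn (fun j : Fin v.length => ω (i + j))

/-!
If `v` occurs in both `v₁` and `v₂`, then `v₁ v₂` contains a factor `v s v`, which has
period `|v| + |s|` and length at most `2L`. Its exponent `(2|v| + |s|) / (|v| + |s|)` is at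
most `n / (n - 1)` exactly when `(n - 2) |v| ≤ |s|`, so `n |v| ≤ 2|v| + |s| ≤ 2L`.
-/

theorem hasPeriod_of_length_le {α : Type*} {w : List α} {p : ℕ} (hp : 1 ≤ p)
    (hw : w.length ≤ p) : _root_.HasPeriod w p :=
  ⟨hp, fun i hi => by omega⟩

theorem HasPeriod.per_le {α : Type*} {w : List α} {p : ℕ} (h : _root_.HasPeriod w p) :
    per w ≤ p :=
  Nat.sInf_le h

theorem hasPeriod_per {α : Type*} (w : List α) : _root_.HasPeriod w (per w) :=
  Nat.sInf_mem (s := {p | _root_.HasPeriod w p})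
    ⟨w.length + 1, hasPeriod_of_length_le (by omega) (by omega)⟩

theorem one_le_per {α : Type*} (w : List α) : 1 ≤ per w :=
  (hasPeriod_per w).1

theorem hasPeriod_append_append_self {α : Type*} {v : List α} (s : List α) (hv : v ≠ []) :
    _root_.HasPeriod (v ++ s ++ v) (v.length + s.length) := by
  have hm : 0 < v.length := length_pos_iff.mpr hv
  refine ⟨by omega, fun i hi => ?_⟩
  simp only [length_append] at hi
  rw [getElem?_append_left (by simp only [length_append]; omega),
    getElem?_append_left (by omega), getElem?_append_right (by simp only [length_append]; omega)]
  simp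

theorem lexpLE.of_infix {α : Type*} {w u : List α} {q : ℚ} (h : lexpLE w q) (hu : u <:+: w) :
    lexpLE u q :=
  fun v hv => h v (hv.trans hu)

theorem lexpLE.length_div_le {α : Type*} {w : List α} {q : ℚ} {p : ℕ} (h : lexpLE w q)
    (hw : w ≠ []) (hp : _root_.HasPeriod w p) : (w.length : ℚ) / p ≤ q := by
  have hper : (0 : ℚ) < per w := by exact_mod_cast one_le_per w
  calc (w.length : ℚ) / p ≤ w.length / per w :=
        div_le_div_of_nonneg_left (Nat.cast_nonneg _) hper (by exact_mod_cast hp.per_le)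
    _ ≤ q := h w (infix_refl w) hw

theorem length_mul_le_of_lexpLE_append_append_self {α : Type*} {v s : List α} {n : ℚ}
    (hn : 1 < n) (hv : v ≠ []) (h : lexpLE (v ++ s ++ v) (n / (n - 1))) :
    (v.length : ℚ) * n ≤ 2 * v.length + s.length := by
  have hexp := h.length_div_le (by simp [hv]) (hasPeriod_append_append_self s hv)
  have hm : 0 < v.length := length_pos_iff.mpr hv
  rw [div_le_div_iff₀ (by positivity) (by linarith)] at hexp
  push_cast [length_append] at hexp
  linarith

theorem exists_append_append_infix_append {α : Type*} {v v₁ v₂ : List α} (h₁ : v <:+: v₁)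
    (h₂ : v <:+: v₂) : ∃ s, v ++ s ++ v <:+: v₁ ++ v₂ := by
  obtain ⟨a, b, rfl⟩ := h₁
  obtain ⟨c, d, rfl⟩ := h₂
  exact ⟨b ++ c, a, d, by simp⟩

theorem stmt2 (n L : ℕ) (hn : 5 ≤ n) (V : Set (List (Fin n)))
    (hlen : ∀ v ∈ V, v.length = L)
    (hpair : ∀ u ∈ V, ∀ v ∈ V, u ≠ v → lexpLE (u ++ v) ((n : ℚ) / (n - 1)))
    (v v₁ v₂ : List (Fin n)) (h₁ : v₁ ∈ V) (h₂ : v₂ ∈ V) (hne : v₁ ≠ v₂)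
    (hf₁ : v <:+: v₁) (hf₂ : v <:+: v₂) :
    (v.length : ℚ) < 2 * L / (n - 1) := by
  have hn1 : (1 : ℚ) < n := by exact_mod_cast (by omega : 1 < n)
  rw [lt_div_iff₀ (by linarith)]
  rcases eq_or_ne v [] with rfl | hv
  · have hL : 0 < L := Nat.pos_of_ne_zero fun hL => hne <| by
      rw [eq_nil_of_length_eq_zero ((hlen v₁ h₁).trans hL),
        eq_nil_of_length_eq_zero ((hlen v₂ h₂).trans hL)]
    simp [hL]
  obtain ⟨s, hs⟩ := exists_append_append_infix_append hf₁ hf₂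
  have hmul := length_mul_le_of_lexpLE_append_append_self hn1 hv
    ((hpair v₁ h₁ v₂ h₂ hne).of_infix hs)
  have hsL : 2 * v.length + s.length ≤ 2 * L := by
    have := hs.length_le
    simp only [length_append, hlen v₁ h₁, hlen v₂ h₂] at this
    omega
  have hm : (0 : ℚ) < v.length := by exact_mod_cast length_pos_iff.mpr hv
  have hsL' : (2 * v.length + s.length : ℚ) ≤ 2 * L := by exact_mod_cast hsL
  linarith [mul_sub_one (v.length : ℚ) n]
end

section
/- Let n ≥ 5, let V be a set of words of common length L over an n-letter alphabet such that any concatenation of two distinct elements of V has local exponent at most n/(n-1), and let u, v, w ∈ V be pairwise distinct. Then the word v cannot occur as a factor of the concatenation uw. -/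
open List

/-! If `v` occurs in `u ++ w` at offset `i`, then `v = u.drop i ++ w.take i` because all three
words have length `L`. Offsets `0` and `L` give `v = u` and `v = w`; any other offset makes
`u.drop i` both a suffix of `u` and a prefix of `v`, so the square `u.drop i ++ u.drop i` is a
factor of `u ++ v`. Its exponent `2` exceeds `n / (n - 1)`. -/

theorem hasPeriod_append_self {α : Type*} {d : List α} (hd : d ≠ []) :
    _root_.HasPeriod (d ++ d) d.length := by
  refine ⟨List.length_pos_iff.mpr hd, fun j hj => ?_⟩
  have hj' : j < d.length := by simp only [List.length_append] at hj; omega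
  rw [List.getElem?_append_left hj', List.getElem?_append_right (by omega), Nat.add_sub_cancel]

theorem one_le_per_of_hasPeriod {α : Type*} {w : List α} {p : ℕ} (h : _root_.HasPeriod w p) :
    1 ≤ per w :=
  (Nat.sInf_mem (s := {p | _root_.HasPeriod w p}) ⟨p, h⟩).1

theorem two_le_length_div_per_append_self {α : Type*} {d : List α} (hd : d ≠ []) :
    (2 : ℚ) ≤ ((d ++ d).length : ℚ) / per (d ++ d) := by
  have hper := hasPeriod_append_self hd
  have hle : per (d ++ d) ≤ d.length := Nat.sInf_le hper
  have hpos := one_le_per_of_hasPeriod hper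
  rw [le_div_iff₀ (by exact_mod_cast hpos), List.length_append]
  exact_mod_cast (by omega : 2 * per (d ++ d) ≤ d.length + d.length)

theorem lexpLE.two_le_of_append_self_infix {α : Type*} {x d : List α} {q : ℚ}
    (h : lexpLE x q) (hd : d ≠ []) (hdx : d ++ d <:+: x) : 2 ≤ q :=
  (two_le_length_div_per_append_self hd).trans (h _ hdx (by simp [hd]))

theorem drop_append_drop_infix_append_drop_append {α : Type*} (u x : List α) (i : ℕ) :
    u.drop i ++ u.drop i <:+: u ++ (u.drop i ++ x) :=
  ⟨u.take i, x, by
    simp only [List.append_assoc]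
    rw [← List.append_assoc (u.take i), List.take_append_drop]⟩

theorem exists_eq_drop_append_take_of_infix_append {α : Type*} {u v w : List α} {L : ℕ}
    (hu : u.length = L) (hv : v.length = L) (hw : w.length = L) (h : v <:+: u ++ w) :
    ∃ i ≤ L, v = u.drop i ++ w.take i := by
  obtain ⟨s, t, hst⟩ := h
  have hlen := congrArg List.length hst
  simp only [List.length_append, hu, hv, hw] at hlen
  refine ⟨s.length, by omega, ?_⟩
  have hvt : v ++ t = (u ++ w).drop s.length := by
    rw [← hst, List.append_assoc, List.drop_left]
  calc v = (v ++ t).take L := by rw [← hv, List.take_left]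
    _ = u.drop s.length ++ w.take s.length := by
      rw [hvt, List.drop_append_of_le_length (by omega), List.take_append,
        List.take_of_length_le (by simp [hu]), List.length_drop, hu]
      congr 2
      omega

theorem stmt5_general (n L : ℕ) (hn : 5 ≤ n) (V : Set (List (Fin n)))
    (hlen : ∀ v ∈ V, v.length = L)
    (hpair : ∀ u ∈ V, ∀ v ∈ V, u ≠ v → lexpLE (u ++ v) ((n : ℚ) / (n - 1)))
    (u v w : List (Fin n)) (hu : u ∈ V) (hv : v ∈ V) (hw : w ∈ V)
    (huv : u ≠ v) (hvw : v ≠ w) :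
    ¬ v <:+: u ++ w := by
  intro hvuw
  obtain ⟨i, hiL, rfl⟩ :=
    exists_eq_drop_append_take_of_infix_append (hlen u hu) (hlen v hv) (hlen w hw) hvuw
  have hq : (n : ℚ) / (n - 1) < 2 := by
    have : (5 : ℚ) ≤ n := by exact_mod_cast hn
    rw [div_lt_iff₀ (by linarith)]
    linarith
  rcases Nat.eq_zero_or_pos i with rfl | hi0
  · simp at huv
  rcases hiL.eq_or_lt with rfl | hiL
  · exact hvw (by simp [← hlen u hu, hlen w hw])
  · have hd : u.drop i ≠ [] := by simp [hlen u hu, hiL]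
    exact hq.not_ge <| (hpair u hu _ hv huv).two_le_of_append_self_infix hd
      (drop_append_drop_infix_append_drop_append u _ i)

theorem stmt5 (n L : ℕ) (hn : 5 ≤ n) (V : Set (List (Fin n)))
    (hlen : ∀ v ∈ V, v.length = L)
    (hpair : ∀ u ∈ V, ∀ v ∈ V, u ≠ v → lexpLE (u ++ v) ((n : ℚ) / (n - 1)))
    (u v w : List (Fin n)) (hu : u ∈ V) (hv : v ∈ V) (hw : w ∈ V)
    (huv : u ≠ v) (huw : u ≠ w) (hvw : v ≠ w) :
    ¬ v <:+: u ++ w :=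
  stmt5_general n L hn V hlen hpair u v w hu hv hw huv hvw
end

section
/- Let n ≥ 5, let w be a word over an n-letter alphabet all of whose factors have exponent at most n/(n-1), and let 0 ≤ ε ≤ 1/(n-1). If xyx is a factor of w with |x| = 2, then (|xyx| + ε)/|xy| ≤ n/(n-1). -/
open List

theorem lexpLE.length_le_mul_of_hasPeriod {α : Type*} {v : List α} {q : ℚ} (h : lexpLE v q)
    (hne : v ≠ []) {p : ℕ} (hp : _root_.HasPeriod v p) : (v.length : ℚ) ≤ q * p := by
  have hmin : _root_.HasPeriod v (per v) :=
    Nat.sInf_mem (s := {p | _root_.HasPeriod v p}) ⟨p, hp⟩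
  have hper_pos : (0 : ℚ) < per v := by exact_mod_cast hmin.1
  have hper_le : (per v : ℚ) ≤ p := by exact_mod_cast Nat.sInf_le hp
  have hexp := h v (List.infix_refl v) hne
  have hq : 0 ≤ q := (div_nonneg (Nat.cast_nonneg _) hper_pos.le).trans hexp
  calc (v.length : ℚ) ≤ q * per v := (div_le_iff₀ hper_pos).1 hexp
    _ ≤ q * p := mul_le_mul_of_nonneg_left hper_le hq

theorem hasPeriod_take_drop {α : Type*} {u : List α} {i p c : ℕ} (hp : 1 ≤ p)
    (hrep : ∀ k ≤ c, u[i + k]? = u[i + p + k]?) :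
    _root_.HasPeriod ((u.drop i).take (p + c + 1)) p := by
  refine ⟨hp, fun k hk => ?_⟩
  have hk' : k + p < p + c + 1 := by simp only [List.length_take] at hk; omega
  rw [List.getElem?_take_of_lt (by omega), List.getElem?_take_of_lt hk', List.getElem?_drop,
    List.getElem?_drop, show i + (k + p) = i + p + k by omega]
  exact hrep k (by omega)

theorem lexpLE.le_mul_of_repetition {α : Type*} {u : List α} {q : ℚ} (h : lexpLE u q)
    {i p c : ℕ} (hp : 1 ≤ p) (hlen : i + p + c < u.length)
    (hrep : ∀ k ≤ c, u[i + k]? = u[i + p + k]?) : ((p + c + 1 : ℕ) : ℚ) ≤ q * p := by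
  set v := (u.drop i).take (p + c + 1)
  have hvlen : v.length = p + c + 1 := by simp only [v, List.length_take, List.length_drop]; omega
  have hvu : v <:+: u := ((u.drop i).take_prefix _).isInfix.trans (u.drop_suffix i).isInfix
  rw [← hvlen]
  exact (h.of_infix hvu).length_le_mul_of_hasPeriod (List.ne_nil_of_length_pos (by omega))
    (hasPeriod_take_drop hp hrep)

theorem lexpLE.mul_sub_one_le_of_repetition {α : Type*} {n : ℕ} (hn : 2 ≤ n) {u : List α}
    (h : lexpLE u ((n : ℚ) / (n - 1))) {i p c : ℕ} (hp : 1 ≤ p) (hlen : i + p + c < u.length)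
    (hrep : ∀ k ≤ c, u[i + k]? = u[i + p + k]?) : (c + 1) * (n - 1) ≤ p := by
  have hbound := h.le_mul_of_repetition hp hlen hrep
  have hn1 : (0 : ℚ) < n - 1 := by
    have : (2 : ℚ) ≤ n := by exact_mod_cast hn
    linarith
  rw [div_mul_eq_mul_div, le_div_iff₀ hn1] at hbound
  suffices ((c + 1 : ℕ) : ℚ) * ((n - 1 : ℕ) : ℚ) ≤ p by exact_mod_cast this
  rw [Nat.cast_pred (by omega)]
  push_cast at hbound ⊢
  linarith

/-- The constraints that local exponent `≤ n / (n - 1)` puts on the letters `f 0, …, f (L - 1)`,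
coming from factors of period `p` and length `p + 1`, resp. `p + 2`. -/
structure ThresholdOn {α : Type*} (n L : ℕ) (f : ℕ → α) : Prop where
  sep : ∀ i j, i < j → j < L → j < i + (n - 1) → f i ≠ f j
  sep_pair : ∀ i j, i < j → j + 1 < L → j < i + 2 * (n - 1) → f i = f j → f (i + 1) ≠ f (j + 1)

theorem lexpLE.thresholdOn {α : Type*} {n : ℕ} (hn : 2 ≤ n) {u : List α}
    (h : lexpLE u ((n : ℚ) / (n - 1))) (d : α) : ThresholdOn n u.length (u.getD · d) := by
  have hget : ∀ a b, a < u.length → b < u.length → u.getD a d = u.getD b d → u[a]? = u[b]? :=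
    fun a b ha hb e => by
      rw [List.getElem?_eq_getElem ha, List.getElem?_eq_getElem hb, ← List.getD_eq_getElem _ d,
        ← List.getD_eq_getElem _ d, e]
  constructor
  · intro i j hij hj hd e
    obtain ⟨p, rfl⟩ := Nat.exists_eq_add_of_lt hij
    have := h.mul_sub_one_le_of_repetition hn (i := i) (p := p + 1) (c := 0) (by omega)
      (by omega) fun k hk => by
        obtain rfl : k = 0 := by omega
        exact hget _ _ (by omega) hj e
    omega
  · intro i j hij hj hd e e'
    obtain ⟨p, rfl⟩ := Nat.exists_eq_add_of_lt hij
    have := h.mul_sub_one_le_of_repetition hn (i := i) (p := p + 1) (c := 1) (by omega)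
      (by omega) fun k hk => by
        obtain rfl | rfl : k = 0 ∨ k = 1 := by omega
        · exact hget _ _ (by omega) (by omega) e
        · exact hget _ _ (by omega) hj e'
    omega

theorem card_add_two_le_of_injOn {α : Type*} [Fintype α] [DecidableEq α] {f : ℕ → α}
    {s : Finset ℕ} (hf : Set.InjOn f s) {a b : α} (ha : ∀ i ∈ s, f i ≠ a)
    (hb : ∀ i ∈ s, f i ≠ b) (hab : a ≠ b) : s.card + 2 ≤ Fintype.card α := by
  have haf : a ∉ s.image f := by simpa [Finset.mem_image] using ha
  have hbf : b ∉ s.image f := by simpa [Finset.mem_image] using hb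
  calc s.card + 2 = (insert a (insert b (s.image f))).card := by
        rw [Finset.card_insert_of_notMem (by simp [haf, hab]), Finset.card_insert_of_notMem hbf,
          Finset.card_image_of_injOn hf]
    _ ≤ Fintype.card α := Finset.card_le_univ _

theorem no_window_missing_two {n L : ℕ} {f : ℕ → Fin n}
    (hsep : ∀ i j, i < j → j < L → j < i + (n - 1) → f i ≠ f j) {s : ℕ} (hs : s + (n - 1) ≤ L)
    {a b : Fin n} (ha : ∀ i, s ≤ i → i < s + (n - 1) → f i ≠ a)
    (hb : ∀ i, s ≤ i → i < s + (n - 1) → f i ≠ b) (hab : a ≠ b) : False := by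
  have hinj : Set.InjOn f (Finset.Ico s (s + (n - 1))) := by
    intro i hi j hj e
    simp only [Finset.coe_Ico, Set.mem_Ico] at hi hj
    by_contra hne
    rcases Nat.lt_or_gt_of_ne hne with h | h
    · exact hsep i j h (by omega) (by omega) e
    · exact hsep j i h (by omega) (by omega) e.symm
  have hcard := card_add_two_le_of_injOn hinj
    (fun i hi => ha i (Finset.mem_Ico.1 hi).1 (Finset.mem_Ico.1 hi).2)
    (fun i hi => hb i (Finset.mem_Ico.1 hi).1 (Finset.mem_Ico.1 hi).2) hab
  rw [Nat.card_Ico, Fintype.card_fin] at hcard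
  omega

section BorderTwo

variable {n : ℕ} {f : ℕ → Fin n}

theorem ThresholdOn.false_of_border_two_of_eq (hf : ThresholdOn n (2 * n) f) (hn : 4 ≤ n)
    (h1 : f 1 = f (2 * n - 1)) (hc : f (n - 1) = f (2 * n - 2)) : False := by
  have hnext : f n ≠ f (2 * n - 1) := by
    convert hf.sep_pair (n - 1) (2 * n - 2) (by omega) (by omega) (by omega) hc using 2 <;> omega
  have hprev : f (n - 2) ≠ f (2 * n - 3) := fun e =>
    hf.sep_pair (n - 2) (2 * n - 3) (by omega) (by omega) (by omega) e
      (by convert hc using 2 <;> omega)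
  refine no_window_missing_two hf.sep (s := n - 2) (a := f 1) (b := f (2 * n - 3)) (by omega)
    (fun i hi hi' e => ?_) (fun i hi hi' e => ?_)
    (fun e => hf.sep (2 * n - 3) (2 * n - 1) (by omega) (by omega) (by omega) (e.symm.trans h1))
  · rcases lt_trichotomy i n with h | rfl | h
    · exact hf.sep 1 i (by omega) (by omega) (by omega) e.symm
    · exact hnext (e.trans h1)
    · exact hf.sep i (2 * n - 1) (by omega) (by omega) (by omega) (e.trans h1)
  · rcases hi.eq_or_lt with rfl | h
    · exact hprev e
    · exact hf.sep i (2 * n - 3) (by omega) (by omega) (by omega) e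

theorem ThresholdOn.false_of_border_two_of_ne (hf : ThresholdOn n (2 * n) f) (hn : 4 ≤ n)
    (h0 : f 0 = f (2 * n - 2)) (hc : f (n - 1) ≠ f (2 * n - 2)) : False := by
  have hmid : f (n - 2) = f (2 * n - 3) := by
    by_contra hne
    refine no_window_missing_two hf.sep (s := n - 2) (a := f 0) (b := f (2 * n - 3)) (by omega)
      (fun i hi hi' e => ?_) (fun i hi hi' e => ?_)
      (fun e => hf.sep (2 * n - 3) (2 * n - 2) (by omega) (by omega) (by omega) (e.symm.trans h0))
    · rcases lt_trichotomy i (n - 1) with h | rfl | h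
      · exact hf.sep 0 i (by omega) (by omega) (by omega) e.symm
      · exact hc (e.trans h0)
      · exact hf.sep i (2 * n - 2) (by omega) (by omega) (by omega) (e.trans h0)
    · rcases hi.eq_or_lt with rfl | h
      · exact hne e
      · exact hf.sep i (2 * n - 3) (by omega) (by omega) (by omega) e
  have hprev : f (n - 3) ≠ f (2 * n - 4) := fun e =>
    hf.sep_pair (n - 3) (2 * n - 4) (by omega) (by omega) (by omega) e
      (by convert hmid using 2 <;> omega)
  refine no_window_missing_two hf.sep (s := n - 3) (a := f 0) (b := f (2 * n - 4)) (by omega)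
    (fun i hi hi' e => ?_) (fun i hi hi' e => ?_)
    (fun e => hf.sep (2 * n - 4) (2 * n - 2) (by omega) (by omega) (by omega) (e.symm.trans h0))
  · rcases lt_trichotomy i (n - 1) with h | rfl | h
    · exact hf.sep 0 i (by omega) (by omega) (by omega) e.symm
    · exact hc (e.trans h0)
    · exact hf.sep i (2 * n - 2) (by omega) (by omega) (by omega) (e.trans h0)
  · rcases hi.eq_or_lt with rfl | h
    · exact hprev e
    · exact hf.sep i (2 * n - 4) (by omega) (by omega) (by omega) e

theorem ThresholdOn.false_of_border_two (hf : ThresholdOn n (2 * n) f) (hn : 4 ≤ n)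
    (h0 : f 0 = f (2 * n - 2)) (h1 : f 1 = f (2 * n - 1)) : False := by
  by_cases hc : f (n - 1) = f (2 * n - 2)
  · exact hf.false_of_border_two_of_eq hn h1 hc
  · exact hf.false_of_border_two_of_ne hn h0 hc

end BorderTwo

theorem lexpLE.false_of_border_two {n : ℕ} (hn : 4 ≤ n) {u : List (Fin n)}
    (h : lexpLE u ((n : ℚ) / (n - 1))) (hlen : u.length = 2 * n)
    (h0 : u[0]? = u[2 * n - 2]?) (h1 : u[1]? = u[2 * n - 1]?) : False := by
  have hf := h.thresholdOn (by omega) (⟨0, by omega⟩ : Fin n)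
  rw [hlen] at hf
  refine hf.false_of_border_two hn ?_ ?_ <;>
    simp only [List.getD_eq_getElem?_getD, h0, h1]

theorem getElem?_append_append_self {α : Type*} {x y : List α} {k : ℕ} (hk : k < x.length) :
    (x ++ y ++ x)[k]? = (x ++ y ++ x)[(x ++ y).length + k]? := by
  rw [List.append_assoc, List.getElem?_append_left hk, ← List.append_assoc,
    List.getElem?_append_right (by omega)]
  simp

theorem stmt8_general (n : ℕ) (hn : 5 ≤ n) (w : List (Fin n))
    (hthr : lexpLE w ((n : ℚ) / (n - 1)))
    (ε : ℚ) (hε1 : ε ≤ 1 / ((n : ℚ) - 1))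
    (x y : List (Fin n)) (hx : x.length = 2) (hfac : x ++ y ++ x <:+: w) :
    (((x ++ y ++ x).length : ℚ) + ε) / ((x ++ y).length : ℚ) ≤ (n : ℚ) / (n - 1) := by
  have hu : lexpLE (x ++ y ++ x) ((n : ℚ) / (n - 1)) := hthr.of_infix hfac
  have hxy : 2 ≤ (x ++ y).length := by simp [hx]
  have hlen : (x ++ y ++ x).length = (x ++ y).length + 2 := by simp only [List.length_append, hx]
  have hborder : ∀ k < 2, (x ++ y ++ x)[k]? = (x ++ y ++ x)[(x ++ y).length + k]? :=
    fun k hk => getElem?_append_append_self (by omega)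
  have hP_ge : 2 * (n - 1) ≤ (x ++ y).length :=
    hu.mul_sub_one_le_of_repetition (i := 0) (by omega) (by omega) (by omega)
      fun k hk => by simpa using hborder k (by omega)
  have hP_ne : (x ++ y).length ≠ 2 * (n - 1) := fun hP =>
    hu.false_of_border_two (by omega) (by omega)
      (by simpa [hP, Nat.mul_sub_one] using hborder 0 (by omega))
      (by convert hborder 1 (by omega) using 2; omega)
  have hn1 : (0 : ℚ) < n - 1 := by
    have : (5 : ℚ) ≤ n := by exact_mod_cast hn
    linarith
  have hP : (2 * n : ℚ) ≤ (x ++ y).length + 1 := by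
    exact_mod_cast (show 2 * n ≤ (x ++ y).length + 1 by omega)
  have hε : ε * (n - 1) ≤ 1 := by rwa [le_div_iff₀ hn1] at hε1
  rw [hlen, div_le_div_iff₀ (by exact_mod_cast (by omega : 0 < (x ++ y).length)) hn1]
  push_cast
  linarith

theorem stmt8 (n : ℕ) (hn : 5 ≤ n) (w : List (Fin n))
    (hthr : lexpLE w ((n : ℚ) / (n - 1)))
    (ε : ℚ) (hε0 : 0 ≤ ε) (hε1 : ε ≤ 1 / ((n : ℚ) - 1))
    (x y : List (Fin n)) (hx : x.length = 2) (hfac : x ++ y ++ x <:+: w) :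
    (((x ++ y ++ x).length : ℚ) + ε) / ((x ++ y).length : ℚ) ≤ (n : ℚ) / (n - 1) :=
  stmt8_general n hn w hthr ε hε1 x y hx hfac
end
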